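/- If the right-angled Artin groups G(Δ) and G(Γ) are abstractly commensurable, then G(Δ) embeds into G(Γ) and G(Γ) embeds into G(Δ). -/
import Mathlib


/-- Commutation relations of the right-angled Artin group on `Γ`. -/
def raagRels {V : Type*} (Γ : SimpleGraph V) : Set (FreeGroup V) :=
  {r | ∃ u v : V, Γ.Adj u v ∧
    r = FreeGroup.of u * FreeGroup.of v * (FreeGroup.of u)⁻¹ * (FreeGroup.of v)⁻¹}

/-- The right-angled Artin group (partially commutative group) on the graph `Γ`. -/
abbrev RAAG {V : Type*} (Γ : SimpleGraph V) : Type _ := PresentedGroup (raagRels Γ)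

/-- The standard generator of `RAAG Γ` corresponding to a vertex `v`. -/
def RAAG.gen {V : Type*} (Γ : SimpleGraph V) (v : V) : RAAG Γ := PresentedGroup.of v


namespace RAAG

variable {V : Type*} {Γ : SimpleGraph V}

/-- Universal property: a vertex map whose images commute along edges extends to a hom. -/
def liftHom {G : Type*} [Group G] (f : V → G)
    (hf : ∀ u v, Γ.Adj u v → Commute (f u) (f v)) : RAAG Γ →* G :=
  PresentedGroup.toGroup (f := f) (by
    rintro r ⟨u, v, huv, rfl⟩
    simp only [map_mul, map_inv, FreeGroup.lift_apply_of]
    have := (hf u v huv).eq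
    group
    rw [(hf u v huv).eq]
    group)

@[simp] lemma liftHom_gen {G : Type*} [Group G] (f : V → G)
    (hf : ∀ u v, Γ.Adj u v → Commute (f u) (f v)) (v : V) :
    liftHom f hf (gen Γ v) = f v :=
  PresentedGroup.toGroup.of _

@[ext] lemma hom_ext {G : Type*} [Group G] {φ ψ : RAAG Γ →* G}
    (h : ∀ v, φ (gen Γ v) = ψ (gen Γ v)) : φ = ψ :=
  PresentedGroup.ext h

lemma gen_comm {u v : V} (h : Γ.Adj u v) : Commute (gen Γ u) (gen Γ v) := by
  have hmem : (FreeGroup.of u * FreeGroup.of v * (FreeGroup.of u)⁻¹ * (FreeGroup.of v)⁻¹ : FreeGroup V)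
      ∈ Subgroup.normalClosure (raagRels Γ) :=
    Subgroup.subset_normalClosure ⟨u, v, h, rfl⟩
  have h1 : (PresentedGroup.mk (raagRels Γ))
      (FreeGroup.of u * FreeGroup.of v * (FreeGroup.of u)⁻¹ * (FreeGroup.of v)⁻¹) = 1 := by
    exact (QuotientGroup.eq_one_iff _).2 hmem
  simp only [map_mul, map_inv] at h1
  have : gen Γ u * gen Γ v * (gen Γ u)⁻¹ * (gen Γ v)⁻¹ = 1 := h1
  have h2 : gen Γ u * gen Γ v * (gen Γ u)⁻¹ * (gen Γ v)⁻¹ = 1 := h1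
  unfold Commute SemiconjBy
  calc gen Γ u * gen Γ v = (gen Γ u * gen Γ v * (gen Γ u)⁻¹ * (gen Γ v)⁻¹) * (gen Γ v * gen Γ u) := by group
  _ = gen Γ v * gen Γ u := by rw [h2]; group

lemma mem_of_forall_gen (H : Subgroup (RAAG Γ)) (h : ∀ v, gen Γ v ∈ H) (x : RAAG Γ) : x ∈ H :=
  PresentedGroup.generated_by _ H h x

/-- The power endomorphism sending each generator to its `m`-th power. -/
def pw (Γ : SimpleGraph V) (m : ℕ) : RAAG Γ →* RAAG Γ :=
  liftHom (fun v => gen Γ v ^ m) (fun u v h => (gen_comm h).pow_pow m m)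

@[simp] lemma pw_gen (m : ℕ) (v : V) : pw Γ m (gen Γ v) = gen Γ v ^ m := liftHom_gen _ _ _

end RAAG

namespace RAAG

variable {V : Type*} {Γ : SimpleGraph V} {S T : Set V}

open scoped Classical

/-- Inclusion of induced subgraphs induces a group hom. -/
def incl (Γ : SimpleGraph V) (hST : S ⊆ T) : RAAG (Γ.induce S) →* RAAG (Γ.induce T) :=
  liftHom (fun v => gen _ ⟨v.1, hST v.2⟩) (fun u v h => gen_comm (by simpa using h))

@[simp] lemma incl_gen (hST : S ⊆ T) (v : S) :
    incl Γ hST (gen _ v) = gen (Γ.induce T) ⟨v.1, hST v.2⟩ := liftHom_gen _ _ _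

/-- Inclusion of an induced subgraph into the whole RAAG. -/
def inclV (Γ : SimpleGraph V) (S : Set V) : RAAG (Γ.induce S) →* RAAG Γ :=
  liftHom (fun v => gen Γ v.1) (fun u v h => gen_comm (by simpa using h))

@[simp] lemma inclV_gen (v : S) : inclV Γ S (gen _ v) = gen Γ v.1 := liftHom_gen _ _ _

/-- Retraction onto an induced subgraph, killing generators outside. -/
noncomputable def retr (Γ : SimpleGraph V) (hST : S ⊆ T) : RAAG (Γ.induce T) →* RAAG (Γ.induce S) :=
  liftHom (fun v => if h : v.1 ∈ S then gen (Γ.induce S) ⟨v.1, h⟩ else 1)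
    (by
      intro u v h
      by_cases hu : u.1 ∈ S
      · by_cases hv : v.1 ∈ S
        · simp only [hu, hv, dif_pos]
          exact gen_comm (by simpa using h)
        · simp only [hv, dif_neg, not_false_iff]
          exact Commute.one_right _
      · simp only [hu, dif_neg, not_false_iff]
        exact Commute.one_left _)

@[simp] lemma retr_gen (hST : S ⊆ T) (v : T) :
    retr Γ hST (gen _ v) = if h : v.1 ∈ S then gen (Γ.induce S) ⟨v.1, h⟩ else 1 :=
  liftHom_gen _ _ _

/-- Retraction of the whole RAAG onto an induced subgraph. -/
noncomputable def retrV (Γ : SimpleGraph V) (S : Set V) : RAAG Γ →* RAAG (Γ.induce S) :=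
  liftHom (fun v => if h : v ∈ S then gen (Γ.induce S) ⟨v, h⟩ else 1)
    (by
      intro u v h
      by_cases hu : u ∈ S
      · by_cases hv : v ∈ S
        · simp only [hu, hv, dif_pos]
          exact gen_comm (by simpa using h)
        · simp only [hv, dif_neg, not_false_iff]
          exact Commute.one_right _
      · simp only [hu, dif_neg, not_false_iff]
        exact Commute.one_left _)

@[simp] lemma retrV_gen (v : V) :
    retrV Γ S (gen Γ v) = if h : v ∈ S then gen (Γ.induce S) ⟨v, h⟩ else 1 :=
  liftHom_gen _ _ _

lemma retr_comp_incl (hST : S ⊆ T) :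
    (retr Γ hST).comp (incl Γ hST) = MonoidHom.id _ := by
  ext v; simp

lemma incl_injective (hST : S ⊆ T) : Function.Injective (incl Γ hST) := by
  have h := retr_comp_incl (Γ := Γ) hST
  intro a b hab
  have := congrArg (retr Γ hST) hab
  rwa [← MonoidHom.comp_apply, ← MonoidHom.comp_apply, h, MonoidHom.id_apply,
    MonoidHom.id_apply] at this

lemma retrV_comp_inclV (S : Set V) :
    (retrV Γ S).comp (inclV Γ S) = MonoidHom.id _ := by
  ext v; simp

lemma inclV_injective (S : Set V) : Function.Injective (inclV Γ S) := by
  have h := retrV_comp_inclV (Γ := Γ) S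
  intro a b hab
  have := congrArg (retrV Γ S) hab
  rwa [← MonoidHom.comp_apply, ← MonoidHom.comp_apply, h, MonoidHom.id_apply,
    MonoidHom.id_apply] at this

lemma inclV_comp_incl (hST : S ⊆ T) :
    (inclV Γ T).comp (incl Γ hST) = inclV Γ S := by
  ext v; simp

lemma incl_comp_pw (hST : S ⊆ T) (m : ℕ) :
    (incl Γ hST).comp (pw _ m) = (pw _ m).comp (incl Γ hST) := by
  ext v; simp [map_pow]

lemma retr_comp_pw (hST : S ⊆ T) (m : ℕ) :
    (retr Γ hST).comp (pw _ m) = (pw _ m).comp (retr Γ hST) := by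
  ext v
  by_cases h : v.1 ∈ S <;> simp [map_pow, h]

lemma inclV_comp_pw (S : Set V) (m : ℕ) :
    (inclV Γ S).comp (pw _ m) = (pw Γ m).comp (inclV Γ S) := by
  ext v; simp [map_pow]

lemma retrV_comp_pw (S : Set V) (m : ℕ) :
    (retrV Γ S).comp (pw Γ m) = (pw _ m).comp (retrV Γ S) := by
  ext v
  by_cases h : v ∈ S <;> simp [map_pow, h]

/-- If the power map on the bigger RAAG is injective, then elements whose power image lies in
the full subgraph subgroup already lie in it. -/
lemma pw_mem_incl_range (hST : S ⊆ T) {m : ℕ}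
    (hinj : Function.Injective (pw (Γ.induce T) m)) {g : RAAG (Γ.induce T)}
    (hg : pw (Γ.induce T) m g ∈ (incl Γ hST).range) : g ∈ (incl Γ hST).range := by
  obtain ⟨c, hc⟩ := hg
  refine ⟨retr Γ hST g, hinj ?_⟩
  calc pw (Γ.induce T) m (incl Γ hST (retr Γ hST g))
      = incl Γ hST (pw (Γ.induce S) m (retr Γ hST g)) :=
        (DFunLike.congr_fun (incl_comp_pw hST m) _).symm
    _ = incl Γ hST (retr Γ hST (pw (Γ.induce T) m g)) :=
        congrArg _ (DFunLike.congr_fun (retr_comp_pw hST m) g).symm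
    _ = incl Γ hST (retr Γ hST (incl Γ hST c)) := by rw [hc]
    _ = incl Γ hST c :=
        congrArg _ (DFunLike.congr_fun (retr_comp_incl hST) c)
    _ = pw (Γ.induce T) m g := hc

end RAAG

open Monoid Function

namespace PushoutEndo

variable {ι : Type*} {H : Type*} [Group H] {G : ι → Type*} [∀ i, Group (G i)]
  (φ : ∀ i, H →* G i)

theorem endo_injective
    (hφ : ∀ i, Injective (φ i))
    (α : ∀ i, G i →* G i) (η : H →* H)
    (hη : Injective η) (hα : ∀ i, Injective (α i))
    (hrange : ∀ i g, α i g ∈ (φ i).range → g ∈ (φ i).range)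
    (hcompat : ∀ i, ((PushoutI.of (φ := φ) i).comp (α i)).comp (φ i)
        = (PushoutI.base φ).comp η) :
    Injective (PushoutI.lift (fun i => (PushoutI.of i).comp (α i))
      ((PushoutI.base φ).comp η) hcompat) := by
  classical
  set L := PushoutI.lift (fun i => (PushoutI.of i).comp (α i))
      ((PushoutI.base φ).comp η) hcompat with hL
  rw [injective_iff_map_eq_one]
  intro x hx
  obtain ⟨d⟩ := PushoutI.NormalWord.transversal_nonempty φ hφ
  set w : PushoutI.NormalWord d := PushoutI.NormalWord.equiv x with hw
  have hxw : w.prod = x := PushoutI.NormalWord.equiv.symm_apply_apply x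
  -- the underlying word of a normal word is reduced
  have hred : PushoutI.Reduced φ w.toWord := by
    rintro ⟨i, g⟩ hg ⟨h, hh⟩
    have h1 : g ≠ 1 := w.ne_one _ hg
    have hset : g ∈ d.set i := w.normalized i g hg
    have hinj := (d.compl i).1
    have : (⟨⟨g, Subgroup.mem_carrier.2 ⟨h, hh⟩⟩, ⟨1, d.one_mem i⟩⟩ :
        ((φ i).range : Set (G i)) × d.set i)
        = ⟨⟨1, Subgroup.one_mem _⟩, ⟨g, hset⟩⟩ := by
      apply hinj
      simp
    exact h1 (congrArg (fun p => (p.2 : G i)) this).symm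
  -- the image word under α
  let w' : CoprodI.Word G :=
    ⟨w.toList.map (fun l => ⟨l.1, α l.1 l.2⟩), by
      intro l hl
      obtain ⟨a, ha, rfl⟩ := List.mem_map.1 hl
      exact fun h1 => w.ne_one a ha ((map_eq_one_iff (α a.1) (hα a.1)).1 h1), by
      have := w.chain_ne
      rw [List.isChain_map]
      exact this⟩
  have hw'red : PushoutI.Reduced φ w' := by
    rintro ⟨i, g⟩ hg hmem
    obtain ⟨a, ha, heq⟩ := List.mem_map.1 hg
    rcases a with ⟨j, b⟩
    obtain ⟨rfl, hb⟩ : j = i ∧ HEq (α j b) g := by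
      simpa using heq
    rw [eq_of_heq hb.symm] at hmem
    exact hred ⟨j, b⟩ ha (hrange j b hmem)
  -- compute L on the word
  have hLof : ∀ (i : ι) (g : G i), L (PushoutI.of i g) = PushoutI.of i (α i g) := by
    intro i g; simp [hL]
  have key : ∀ u : CoprodI.Word G, PushoutI.ofCoprodI u.prod
      = (u.toList.map (fun p : Σ i, G i => PushoutI.of (φ := φ) p.1 p.2)).prod := by
    intro u
    rw [CoprodI.Word.prod, map_list_prod, List.map_map]
    congr 1
    all_goals
      apply List.map_congr_left
      intro a _
      exact PushoutI.ofCoprodI_of a.1 a.2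
  have hprodeq : L (PushoutI.ofCoprodI w.toWord.prod) = PushoutI.ofCoprodI w'.prod := by
    rw [key, key, map_list_prod, List.map_map]
    show _ = (List.map (fun p : Σ i, G i => PushoutI.of (φ := φ) p.1 p.2)
      (w.toList.map (fun l => ⟨l.1, α l.1 l.2⟩))).prod
    rw [List.map_map]
    congr 1
    all_goals
      apply List.map_congr_left
      intro a _
      exact hLof a.1 a.2
  have hxdecomp : x = PushoutI.base φ w.head * PushoutI.ofCoprodI w.toWord.prod := by
    rw [← hxw]; rfl
  have hx' : PushoutI.base φ (η w.head) * PushoutI.ofCoprodI w'.prod = 1 := by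
    rw [← hprodeq]
    have hbase : L (PushoutI.base φ w.head) = PushoutI.base φ (η w.head) := by simp [hL]
    rw [← hbase, ← map_mul, ← hxdecomp]
    exact hx
  have hmem : PushoutI.ofCoprodI w'.prod ∈ (PushoutI.base φ).range := by
    refine ⟨(η w.head)⁻¹, ?_⟩
    rw [map_inv]
    rw [eq_inv_of_mul_eq_one_left hx', inv_inv]
  have hempty : w' = CoprodI.Word.empty := hw'red.eq_empty_of_mem_range hφ hmem
  have hnil : w.toList = [] := by
    have : w.toList.map (fun l => (⟨l.1, α l.1 l.2⟩ : Σ i, G i)) = [] :=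
      congrArg CoprodI.Word.toList hempty
    exact List.map_eq_nil_iff.1 this
  have hwprod : w.toWord.prod = 1 := by
    rw [CoprodI.Word.prod, hnil]; simp
  have hxbase : x = PushoutI.base φ w.head := by
    rw [hxdecomp, hwprod, map_one, mul_one]
  have : PushoutI.base φ (η w.head) = 1 := by
    have : L x = PushoutI.base φ (η w.head) := by rw [hxbase]; simp [hL]
    rw [← this]; exact hx
  have h2 : η w.head = 1 := PushoutI.base_injective hφ (by rw [this, map_one])
  have hhead : w.head = 1 := hη (by rw [h2, map_one])
  rw [hxbase, hhead, map_one]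

end PushoutEndo

namespace RAAG

open Function

variable {V : Type*} {Γ : SimpleGraph V}

lemma pw_injective_cone (v : V) (hv : ∀ u : V, u ≠ v → Γ.Adj v u) (m : ℕ) (hm : m ≠ 0)
    (ihA : Injective (pw (Γ.induce ({v}ᶜ : Set V)) m)) : Injective (pw Γ m) := by
  classical
  set A : Set V := {v}ᶜ with hA
  let π₂ : RAAG Γ →* Multiplicative ℤ :=
    liftHom (fun u => if u = v then Multiplicative.ofAdd (1 : ℤ) else 1)
      (fun _ _ _ => Commute.all _ _)
  let p : RAAG Γ →* RAAG (Γ.induce A) × Multiplicative ℤ := (retrV Γ A).prod π₂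
  have hcent : ∀ x : RAAG (Γ.induce A), Commute (inclV Γ A x) (gen Γ v) := by
    intro x
    have hx : x ∈ (Subgroup.centralizer {gen Γ v}).comap (inclV Γ A) := by
      apply mem_of_forall_gen
      intro u
      rw [Subgroup.mem_comap, Subgroup.mem_centralizer_iff]
      rintro g hg
      rw [Set.mem_singleton_iff] at hg
      subst hg
      have hne : u.1 ≠ v := u.2
      simpa using (gen_comm (hv u.1 hne)).eq
    rw [Subgroup.mem_comap, Subgroup.mem_centralizer_iff] at hx
    exact (hx (gen Γ v) rfl).symm
  let σ : RAAG (Γ.induce A) × Multiplicative ℤ →* RAAG Γ :=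
    MonoidHom.noncommCoprod (inclV Γ A) (zpowersHom (RAAG Γ) (gen Γ v))
      (fun a b => by
        simpa using (hcent a).zpow_right (Multiplicative.toAdd b))
  have hσp : σ.comp p = MonoidHom.id _ := by
    ext u
    simp only [MonoidHom.comp_apply, MonoidHom.id_apply, p, MonoidHom.prod_apply,
      MonoidHom.noncommCoprod_apply, σ, π₂, retrV_gen, liftHom_gen]
    by_cases h : u = v
    · rw [dif_neg (by simp [hA, h]), if_pos h, h]
      simp
    · rw [dif_pos (by simp [hA, h]), if_neg h]
      simp
  have hp_inj : Injective p := by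
    intro a b hab
    have := congrArg σ hab
    rwa [← MonoidHom.comp_apply, ← MonoidHom.comp_apply, hσp, MonoidHom.id_apply,
      MonoidHom.id_apply] at this
  let q : RAAG (Γ.induce A) × Multiplicative ℤ →* RAAG (Γ.induce A) × Multiplicative ℤ :=
    (pw (Γ.induce A) m).prodMap (powMonoidHom m)
  have hdiag : p.comp (pw Γ m) = q.comp p := by
    apply hom_ext
    intro u
    rw [MonoidHom.comp_apply, MonoidHom.comp_apply, pw_gen, map_pow]
    show ((retrV Γ A (gen Γ u)) ^ m, (π₂ (gen Γ u)) ^ m)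
      = (pw (Γ.induce A) m (retrV Γ A (gen Γ u)), (π₂ (gen Γ u)) ^ m)
    refine Prod.ext ?_ rfl
    show (retrV Γ A (gen Γ u)) ^ m = pw (Γ.induce A) m (retrV Γ A (gen Γ u))
    rw [retrV_gen]
    by_cases h : u ∈ A
    · rw [dif_pos h]
      simp
    · rw [dif_neg h]
      simp
  have hz : Injective (powMonoidHom m : Multiplicative ℤ →* Multiplicative ℤ) := by
    intro a b hab
    have h1 : Multiplicative.toAdd a * (m : ℤ) = Multiplicative.toAdd b * (m : ℤ) := by
      simpa [powMonoidHom_apply, Int.toAdd_pow] using congrArg Multiplicative.toAdd hab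
    exact Multiplicative.toAdd.injective
      (mul_right_cancel₀ (b := (m : ℤ)) (by exact_mod_cast hm) h1)
  have hq_inj : Injective q := Function.Injective.prodMap ihA hz
  have hcomp : Injective (⇑p ∘ ⇑(pw Γ m)) := by
    have : ⇑p ∘ ⇑(pw Γ m) = ⇑(q.comp p) := by rw [← hdiag]; rfl
    rw [this, MonoidHom.coe_comp]
    exact hq_inj.comp hp_inj
  exact hcomp.of_comp

end RAAG

namespace RAAG

open Function Monoid

section Amalgam

variable {V : Type*} (Γ : SimpleGraph V) (v : V)

open scoped Classical

/-- Vertices other than `v`. -/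
abbrev setA : Set V := {v}ᶜ
/-- The closed star of `v`. -/
abbrev setB : Set V := {u | u = v ∨ Γ.Adj v u}
/-- The link of `v`. -/
abbrev setC : Set V := {u | Γ.Adj v u}

lemma hCA : setC Γ v ⊆ setA v := fun u hu => (SimpleGraph.Adj.ne' hu : u ≠ v)

lemma hCB : setC Γ v ⊆ setB Γ v := fun u hu => Or.inr hu

/-- The two vertex groups of the amalgam decomposition. -/
abbrev Gfam : Bool → Type _ := fun b => RAAG (Γ.induce (cond b (setA v) (setB Γ v)))

/-- The edge maps of the amalgam decomposition. -/
abbrev φfam : ∀ b : Bool, RAAG (Γ.induce (setC Γ v)) →* Gfam Γ v b :=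
  fun b => Bool.rec (incl Γ (hCB Γ v)) (incl Γ (hCA Γ v)) b

lemma φfam_injective (b : Bool) : Injective (φfam Γ v b) := by
  cases b
  · exact incl_injective (hCB Γ v)
  · exact incl_injective (hCA Γ v)

lemma of_true_eq_of_false {u : V} (hu : u ∈ setC Γ v) :
    PushoutI.of (φ := φfam Γ v) true (gen (Γ.induce (setA v)) ⟨u, hCA Γ v hu⟩)
      = PushoutI.of (φ := φfam Γ v) false (gen (Γ.induce (setB Γ v)) ⟨u, hCB Γ v hu⟩) := by
  have h1 := PushoutI.of_apply_eq_base (φfam Γ v) true (gen (Γ.induce (setC Γ v)) ⟨u, hu⟩)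
  have h2 := PushoutI.of_apply_eq_base (φfam Γ v) false (gen (Γ.induce (setC Γ v)) ⟨u, hu⟩)
  rw [show (φfam Γ v true) (gen (Γ.induce (setC Γ v)) ⟨u, hu⟩)
      = gen (Γ.induce (setA v)) ⟨u, hCA Γ v hu⟩ from incl_gen _ _] at h1
  rw [show (φfam Γ v false) (gen (Γ.induce (setC Γ v)) ⟨u, hu⟩)
      = gen (Γ.induce (setB Γ v)) ⟨u, hCB Γ v hu⟩ from incl_gen _ _] at h2
  rw [h1, h2]

/-- The map from the RAAG to the amalgam. -/
noncomputable def theta : RAAG Γ →* PushoutI (φfam Γ v) :=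
  liftHom (fun u =>
    if h : u = v then
      PushoutI.of (φ := φfam Γ v) false (gen (Γ.induce (setB Γ v)) ⟨v, Or.inl rfl⟩)
    else PushoutI.of (φ := φfam Γ v) true (gen (Γ.induce (setA v)) ⟨u, h⟩))
    (by
      intro u₁ u₂ hadj
      by_cases h1 : u₁ = v
      · subst h1
        have h2 : u₂ ≠ u₁ := (SimpleGraph.Adj.ne' hadj)
        rw [dif_pos rfl, dif_neg h2]
        have hC : u₂ ∈ setC Γ u₁ := hadj
        rw [of_true_eq_of_false Γ u₁ hC]
        refine Commute.map ?_ (PushoutI.of false)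
        exact gen_comm (by simpa using hadj)
      · by_cases h2 : u₂ = v
        · subst h2
          have h1' : u₁ ≠ u₂ := h1
          rw [dif_pos rfl, dif_neg h1]
          have hC : u₁ ∈ setC Γ u₂ := hadj.symm
          rw [of_true_eq_of_false Γ u₂ hC]
          refine Commute.map ?_ (PushoutI.of false)
          exact gen_comm (by simpa using hadj)
        · rw [dif_neg h1, dif_neg h2]
          refine Commute.map ?_ (PushoutI.of true)
          exact gen_comm (by simpa using hadj))

@[simp] lemma theta_gen_v :
    theta Γ v (gen Γ v)
      = PushoutI.of (φ := φfam Γ v) false (gen (Γ.induce (setB Γ v)) ⟨v, Or.inl rfl⟩) := by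
  rw [theta, liftHom_gen, dif_pos rfl]

lemma theta_gen_ne {u : V} (h : u ≠ v) :
    theta Γ v (gen Γ u)
      = PushoutI.of (φ := φfam Γ v) true (gen (Γ.induce (setA v)) ⟨u, h⟩) := by
  rw [theta, liftHom_gen, dif_neg h]

/-- The map from the amalgam to the RAAG. -/
def psi : PushoutI (φfam Γ v) →* RAAG Γ :=
  PushoutI.lift
    (fun b => Bool.rec (inclV Γ (setB Γ v)) (inclV Γ (setA v)) b)
    (inclV Γ (setC Γ v))
    (by
      intro b
      cases b
      · ext c
        show inclV Γ (setB Γ v) ((incl Γ (hCB Γ v)) (gen _ c)) = inclV Γ (setC Γ v) (gen _ c)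
        rw [incl_gen, inclV_gen, inclV_gen]
      · ext c
        show inclV Γ (setA v) ((incl Γ (hCA Γ v)) (gen _ c)) = inclV Γ (setC Γ v) (gen _ c)
        rw [incl_gen, inclV_gen, inclV_gen])

@[simp] lemma psi_of_true (x : RAAG (Γ.induce (setA v))) :
    psi Γ v (PushoutI.of (φ := φfam Γ v) true x) = inclV Γ (setA v) x := by
  rw [psi, PushoutI.lift_of]

@[simp] lemma psi_of_false (x : RAAG (Γ.induce (setB Γ v))) :
    psi Γ v (PushoutI.of (φ := φfam Γ v) false x) = inclV Γ (setB Γ v) x := by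
  rw [psi, PushoutI.lift_of]

lemma psi_comp_theta : (psi Γ v).comp (theta Γ v) = MonoidHom.id _ := by
  apply hom_ext
  intro u
  by_cases h : u = v
  · subst h
    rw [MonoidHom.comp_apply, theta_gen_v, psi_of_false, inclV_gen, MonoidHom.id_apply]
  · rw [MonoidHom.comp_apply, theta_gen_ne Γ v h, psi_of_true, inclV_gen, MonoidHom.id_apply]

lemma theta_comp_psi : (theta Γ v).comp (psi Γ v) = MonoidHom.id _ := by
  apply PushoutI.hom_ext_nonempty
  intro b
  cases b
  · -- b = false, vertex group B
    ext u
    show theta Γ v (psi Γ v (PushoutI.of (φ := φfam Γ v) false (gen (Γ.induce (setB Γ v)) u)))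
      = PushoutI.of (φ := φfam Γ v) false (gen (Γ.induce (setB Γ v)) u)
    rw [psi_of_false, inclV_gen]
    rcases u.2 with h | h
    · rw [theta, liftHom_gen, dif_pos h]
      congr 1
      exact congrArg _ (Subtype.ext h.symm)
    · have hne : u.1 ≠ v := (SimpleGraph.Adj.ne' h)
      rw [theta, liftHom_gen, dif_neg hne]
      have hC : u.1 ∈ setC Γ v := h
      rw [of_true_eq_of_false Γ v hC]
      congr 1
  · -- b = true, vertex group A
    ext u
    show theta Γ v (psi Γ v (PushoutI.of (φ := φfam Γ v) true (gen (Γ.induce (setA v)) u)))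
      = PushoutI.of (φ := φfam Γ v) true (gen (Γ.induce (setA v)) u)
    rw [psi_of_true, inclV_gen]
    have hne : u.1 ≠ v := u.2
    rw [theta, liftHom_gen, dif_neg hne]
    congr 1

end Amalgam

end RAAG

namespace RAAG

open Function Monoid

section Amalgam2

variable {V : Type*} (Γ : SimpleGraph V) (v : V)

lemma injective_of_left_inverse {G H : Type*} [Group G] [Group H] {f : G →* H} {g : H →* G}
    (h : g.comp f = MonoidHom.id G) : Injective f := by
  intro a b hab
  have := congrArg g hab
  rwa [← MonoidHom.comp_apply, ← MonoidHom.comp_apply, h, MonoidHom.id_apply,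
    MonoidHom.id_apply] at this

lemma pw_injective_amalgam (m : ℕ)
    (hA : Injective (pw (Γ.induce (setA v)) m))
    (hB : Injective (pw (Γ.induce (setB Γ v)) m))
    (hC : Injective (pw (Γ.induce (setC Γ v)) m)) :
    Injective (pw Γ m) := by
  classical
  set α : ∀ b : Bool, Gfam Γ v b →* Gfam Γ v b :=
    fun b => pw (Γ.induce (cond b (setA v) (setB Γ v))) m with hαdef
  have hcompat : ∀ b, ((PushoutI.of (φ := φfam Γ v) b).comp (α b)).comp (φfam Γ v b)
      = (PushoutI.base (φfam Γ v)).comp (pw (Γ.induce (setC Γ v)) m) := by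
    intro b
    cases b
    · ext c
      show PushoutI.of (φ := φfam Γ v) false
          (pw (Γ.induce (setB Γ v)) m ((incl Γ (hCB Γ v)) (gen (Γ.induce (setC Γ v)) c)))
        = PushoutI.base (φfam Γ v) (pw (Γ.induce (setC Γ v)) m (gen (Γ.induce (setC Γ v)) c))
      rw [incl_gen, pw_gen, pw_gen, map_pow, map_pow,
        ← PushoutI.of_apply_eq_base (φfam Γ v) false,
        show (φfam Γ v false) (gen (Γ.induce (setC Γ v)) c)
          = gen (Γ.induce (setB Γ v)) ⟨c.1, hCB Γ v c.2⟩ from incl_gen _ _]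
    · ext c
      show PushoutI.of (φ := φfam Γ v) true
          (pw (Γ.induce (setA v)) m ((incl Γ (hCA Γ v)) (gen (Γ.induce (setC Γ v)) c)))
        = PushoutI.base (φfam Γ v) (pw (Γ.induce (setC Γ v)) m (gen (Γ.induce (setC Γ v)) c))
      rw [incl_gen, pw_gen, pw_gen, map_pow, map_pow,
        ← PushoutI.of_apply_eq_base (φfam Γ v) true,
        show (φfam Γ v true) (gen (Γ.induce (setC Γ v)) c)
          = gen (Γ.induce (setA v)) ⟨c.1, hCA Γ v c.2⟩ from incl_gen _ _]
  have hLinj : Injective (PushoutI.lift (fun b => (PushoutI.of b).comp (α b))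
      ((PushoutI.base (φfam Γ v)).comp (pw (Γ.induce (setC Γ v)) m)) hcompat) := by
    apply PushoutEndo.endo_injective (φfam Γ v) (φfam_injective Γ v) α
      (pw (Γ.induce (setC Γ v)) m) hC
    · intro b
      cases b
      · exact hB
      · exact hA
    · intro b g
      cases b
      · exact fun hg => pw_mem_incl_range (hCB Γ v) hB hg
      · exact fun hg => pw_mem_incl_range (hCA Γ v) hA hg
  set L := PushoutI.lift (fun b => (PushoutI.of b).comp (α b))
      ((PushoutI.base (φfam Γ v)).comp (pw (Γ.induce (setC Γ v)) m)) hcompat with hLdef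
  have hendo : pw Γ m = (psi Γ v).comp (L.comp (theta Γ v)) := by
    apply hom_ext
    intro u
    rw [pw_gen, MonoidHom.comp_apply, MonoidHom.comp_apply]
    by_cases h : u = v
    · rw [h, theta_gen_v]
      rw [show L (PushoutI.of (φ := φfam Γ v) false (gen (Γ.induce (setB Γ v)) ⟨v, Or.inl rfl⟩))
          = PushoutI.of (φ := φfam Γ v) false
            ((α false) (gen (Γ.induce (setB Γ v)) ⟨v, Or.inl rfl⟩)) from
          PushoutI.lift_of _ _ _ _]
      show _ = psi Γ v (PushoutI.of (φ := φfam Γ v) false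
          (pw (Γ.induce (setB Γ v)) m (gen (Γ.induce (setB Γ v)) ⟨v, Or.inl rfl⟩)))
      rw [pw_gen, map_pow, map_pow, psi_of_false, inclV_gen]
    · rw [theta_gen_ne Γ v h]
      rw [show L (PushoutI.of (φ := φfam Γ v) true (gen (Γ.induce (setA v)) ⟨u, h⟩))
          = PushoutI.of (φ := φfam Γ v) true ((α true) (gen (Γ.induce (setA v)) ⟨u, h⟩)) from
          PushoutI.lift_of _ _ _ _]
      show _ = psi Γ v (PushoutI.of (φ := φfam Γ v) true
          (pw (Γ.induce (setA v)) m (gen (Γ.induce (setA v)) ⟨u, h⟩)))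
      rw [pw_gen, map_pow, map_pow, psi_of_true, inclV_gen]
  have hθ : Injective (theta Γ v) := injective_of_left_inverse (psi_comp_theta Γ v)
  have hψ : Injective (psi Γ v) := injective_of_left_inverse (theta_comp_psi Γ v)
  rw [show ⇑(pw Γ m) = ⇑(psi Γ v) ∘ ⇑L ∘ ⇑(theta Γ v) by rw [hendo]; rfl]
  exact hψ.comp (hLinj.comp hθ)

end Amalgam2

end RAAG

namespace RAAG

open Function

universe u

theorem pw_injective_aux : ∀ (n : ℕ) {V : Type u} [Fintype V] (Γ : SimpleGraph V),
    Fintype.card V ≤ n → ∀ m : ℕ, m ≠ 0 → Injective (pw Γ m) := by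
  intro n
  induction n with
  | zero =>
    intro V _ Γ hcard m hm
    have hVempty : IsEmpty V := by
      rw [← Fintype.card_eq_zero_iff]
      omega
    have hsub : ∀ x : RAAG Γ, x = 1 := by
      intro x
      have := mem_of_forall_gen (⊥ : Subgroup (RAAG Γ)) (fun v => hVempty.elim v) x
      simpa [Subgroup.mem_bot] using this
    intro a b _
    rw [hsub a, hsub b]
  | succ n ih =>
    intro V _ Γ hcard m hm
    classical
    by_cases hn : Fintype.card V ≤ n
    · exact ih Γ hn m hm
    have hcV : Fintype.card V = n + 1 := le_antisymm hcard (not_le.1 hn)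
    have hne : Nonempty V := Fintype.card_pos_iff.1 (by omega)
    have hcompl : ∀ v : V, Fintype.card ({v}ᶜ : Set V) ≤ n := by
      intro v
      have := Fintype.card_compl_set ({v} : Set V)
      have h1 : Fintype.card ({v} : Set V) = 1 := by simp
      omega
    by_cases hcone : ∃ v : V, ∀ u : V, u ≠ v → Γ.Adj v u
    · obtain ⟨v, hv⟩ := hcone
      exact pw_injective_cone v hv m hm (ih (Γ.induce ({v}ᶜ : Set V)) (hcompl v) m hm)
    · push_neg at hcone
      obtain ⟨v⟩ := hne
      obtain ⟨w, hwv, hnadj⟩ := hcone v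
      have hBsub : setB Γ v ⊆ ({w}ᶜ : Set V) := by
        intro u hu
        rcases hu with h | h
        · subst h
          simp only [Set.mem_compl_iff, Set.mem_singleton_iff]
          exact fun hh => hwv hh.symm
        · simp only [Set.mem_compl_iff, Set.mem_singleton_iff]
          rintro rfl
          exact hnadj h
      have hCsub : setC Γ v ⊆ ({w}ᶜ : Set V) := (hCB Γ v).trans hBsub
      have hcardB : Fintype.card (setB Γ v) ≤ n :=
        le_trans (Fintype.card_le_of_injective _ (Set.inclusion_injective hBsub)) (hcompl w)
      have hcardC : Fintype.card (setC Γ v) ≤ n :=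
        le_trans (Fintype.card_le_of_injective _ (Set.inclusion_injective hCsub)) (hcompl w)
      exact pw_injective_amalgam Γ v m
        (ih (Γ.induce (setA v)) (hcompl v) m hm)
        (ih (Γ.induce (setB Γ v)) hcardB m hm)
        (ih (Γ.induce (setC Γ v)) hcardC m hm)

theorem pw_injective {V : Type u} [Fintype V] (Γ : SimpleGraph V) (m : ℕ) (hm : m ≠ 0) :
    Injective (pw Γ m) :=
  pw_injective_aux (Fintype.card V) Γ le_rfl m hm

/-- Given a finite-index subgroup `H` of a RAAG over a finite graph, there is an injective
homomorphism of the whole RAAG into `H`. -/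
theorem exists_injective_into_finiteIndex {V : Type u} [Fintype V] (Γ : SimpleGraph V)
    (H : Subgroup (RAAG Γ)) (hH : H.FiniteIndex) :
    ∃ f : RAAG Γ →* RAAG Γ, Function.Injective f ∧ ∀ x, f x ∈ H := by
  haveI := hH
  haveI : H.normalCore.FiniteIndex := Subgroup.finiteIndex_normalCore H
  set m : ℕ := H.normalCore.index with hm
  have hmne : m ≠ 0 := Subgroup.FiniteIndex.index_ne_zero
  have hmem : ∀ x, pw Γ m x ∈ H := by
    intro x
    have : x ∈ Subgroup.comap (pw Γ m) H := by
      apply mem_of_forall_gen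
      intro u
      rw [Subgroup.mem_comap, pw_gen]
      exact H.normalCore_le (Subgroup.pow_index_mem H.normalCore (gen Γ u))
    rwa [Subgroup.mem_comap] at this
  exact ⟨pw Γ m, pw_injective Γ m hmne, hmem⟩

end RAAG

/-- Commensurable RAAGs embed into each other. -/
theorem commensurable_raags_embed
    {VΔ VΓ : Type*} [Fintype VΔ] [Fintype VΓ]
    (Δ : SimpleGraph VΔ) (Γ : SimpleGraph VΓ)
    (H : Subgroup (RAAG Δ)) (K : Subgroup (RAAG Γ))
    (hH : H.FiniteIndex) (hK : K.FiniteIndex)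
    (hiso : Nonempty (H ≃* K)) :
    (∃ f : RAAG Δ →* RAAG Γ, Function.Injective f) ∧
    (∃ g : RAAG Γ →* RAAG Δ, Function.Injective g) := by
  obtain ⟨e⟩ := hiso
  constructor
  · obtain ⟨f, hfinj, hfmem⟩ := RAAG.exists_injective_into_finiteIndex Δ H hH
    have h1 : Function.Injective (f.codRestrict H hfmem) := fun a b hab =>
      hfinj (congrArg Subtype.val hab)
    refine ⟨K.subtype.comp (e.toMonoidHom.comp (f.codRestrict H hfmem)), ?_⟩
    intro a b hab
    apply h1
    apply e.injective
    exact K.subtype_injective (by simpa using hab)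
  · obtain ⟨g, hginj, hgmem⟩ := RAAG.exists_injective_into_finiteIndex Γ K hK
    have h1 : Function.Injective (g.codRestrict K hgmem) := fun a b hab =>
      hginj (congrArg Subtype.val hab)
    refine ⟨H.subtype.comp (e.symm.toMonoidHom.comp (g.codRestrict K hgmem)), ?_⟩
    intro a b hab
    apply h1
    apply e.symm.injective
    exact H.subtype_injective (by simpa using hab)
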